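/- arXiv:1511.00452 — 2 statements merged into one kernel-verified Lean document; each statement's English description precedes it below -/
import Mathlib

section
/- Suppose |M| = |W|, every woman's preference list is full (ranks all of M), and all women share the same preference list, i.e., q̄ = (q)_{w∈W} for some q ∈ P(M). Then the M-optimal stable matching rule C^q̄ is OSP-implementable (in particular, by the sequential serial dictatorship mechanism in which men, in the order given by q, each pick their favorite remaining woman). -/
/-- A preference list over `α` (a totally ordered subset of `α`), represented as a
duplicate-free list, most-preferred member first. Members of `α` not on the list
are unranked (unacceptable). -/
abbrev PrefList (α : Type) : Type := {l : List α // l.Nodup}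

/-- `x ≻ y` according to `p`: `x` is ranked above `y` on `p`, or `x` appears on `p`
while `y` does not. -/
def prefers {α : Type} (p : PrefList α) (x y : α) : Prop :=
  [x, y].Sublist p.val ∨ (x ∈ p.val ∧ y ∉ p.val)

/-- Strict preference over possible outcomes, where `none` means being unmatched:
being matched to someone on one's list is better than being unmatched, which is
better than being matched to someone not on one's list. -/
def outPrefers {α : Type} (p : PrefList α) : Option α → Option α → Prop
  | some x, some y => prefers p x y
  | some x, none => x ∈ p.val
  | none, some y => y ∉ p.val
  | none, none => False

/-- A preference list is full if it ranks every member of the opposite side. -/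
def IsFull {α : Type} (p : PrefList α) : Prop := ∀ x : α, x ∈ p.val

/-- A matching between `M` and `W`: a one-to-one mapping between a subset of `M`
and a subset of `W`, recorded as a partial injective function from men to women
(`μ.toFun m = none` meaning that `m` is unmatched). -/
structure Matching (M W : Type) where
  toFun : M → Option W
  inj : ∀ ⦃m m' : M⦄ ⦃w : W⦄, toFun m = some w → toFun m' = some w → m = m'

/-- Woman `w` strictly prefers man `m` (according to her list `q`) over the partner
matched to her by `μ` (or over remaining unmatched, if `μ` leaves her unmatched). -/
def womanPrefersOver {M W : Type} (q : PrefList M) (μ : Matching M W) (w : W) (m : M) : Prop :=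
  (∃ m', μ.toFun m' = some w ∧ prefers q m m') ∨
    ((∀ m', μ.toFun m' ≠ some w) ∧ m ∈ q.val)

/-- `μ` is stable with respect to men's profile `pbar` and women's profile `qbar`:
there is no man and woman each preferring the other over their match under `μ`, and
no participant is matched with a partner not on their preference list. -/
def IsStable {M W : Type} (pbar : M → PrefList W) (qbar : W → PrefList M)
    (μ : Matching M W) : Prop :=
  ¬ ((∃ m w, outPrefers (pbar m) (some w) (μ.toFun m) ∧ womanPrefersOver (qbar w) μ w m) ∨
     (∃ m w, μ.toFun m = some w ∧ (w ∉ (pbar m).val ∨ m ∉ (qbar w).val)))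

/-- `C` is `qbar`-stable: `C pbar` is stable with respect to `pbar` and `qbar` for
every men's profile `pbar`. -/
def IsStableRule {M W : Type} (qbar : W → PrefList M)
    (C : (M → PrefList W) → Matching M W) : Prop :=
  ∀ pbar, IsStable pbar qbar (C pbar)

/-- `C` is the `M`-optimal stable matching rule `C^qbar`: it maps each men's profile
`pbar` to a stable matching that every man weakly prefers to every stable matching. -/
def IsMOptimalStableRule {M W : Type} (qbar : W → PrefList M)
    (C : (M → PrefList W) → Matching M W) : Prop :=
  ∀ pbar, IsStable pbar qbar (C pbar) ∧
    ∀ μ, IsStable pbar qbar μ → ∀ m, ¬ outPrefers (pbar m) (μ.toFun m) ((C pbar).toFun m)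

/-- `C` is strategy-proof for man `m`. -/
def StrategyProofFor {M W : Type} [DecidableEq M]
    (C : (M → PrefList W) → Matching M W) (m : M) : Prop :=
  ∀ (pbar : M → PrefList W) (p' : PrefList W),
    ¬ outPrefers (pbar m) ((C (Function.update pbar m p')).toFun m) ((C pbar).toFun m)

/-- A women's profile `qbar` is cyclical if there are men `a`, `b`, `c` and women
`x`, `y` with `a ≻ₓ b ≻ₓ c ≻_y a`. -/
def Cyclical {M W : Type} (qbar : W → PrefList M) : Prop :=
  ∃ (a b c : M) (x y : W),
    prefers (qbar x) a b ∧ prefers (qbar x) b c ∧ prefers (qbar y) c a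

/-- A one-side-querying extensive-form matching mechanism for `M` over `W`: a rooted
tree each of whose leaves is labeled by a matching and each of whose internal nodes
queries a man; the edges out of an internal node querying `q` are the fibers of the
function `next` (two preference lists for `q` lie on the same outgoing edge iff they
are routed to the same subtree). -/
inductive Mech (M W : Type) : Type
  | leaf (μ : Matching M W)
  | node (q : M) (next : PrefList W → Mech M W)

/-- The matching rule implemented by a mechanism: route the profile from the root to
a leaf and output that leaf's matching. -/
def Mech.run {M W : Type} : Mech M W → (M → PrefList W) → Matching M W
  | .leaf μ, _ => μ
  | .node q next, pbar => (next (pbar q)).run pbar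

/-- Auxiliary definition of obvious strategy-proofness for man `m`: `P` is the set of
profiles passing through the current node. At each node querying `m`, for all profiles
`pbar`, `pbar'` passing through the node at which `m`'s lists diverge (are routed to
distinct subtrees), the outcome of `pbar'` is not strictly preferred (according to
`pbar m`) to the outcome of `pbar`. -/
def Mech.OSPAux {M W : Type} (m : M) : Mech M W → Set (M → PrefList W) → Prop
  | .leaf _, _ => True
  | .node q next, P =>
      (q = m → ∀ pbar ∈ P, ∀ pbar' ∈ P, next (pbar m) ≠ next (pbar' m) →
        ¬ outPrefers (pbar m) (((next (pbar' m)).run pbar').toFun m)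
            (((next (pbar m)).run pbar).toFun m)) ∧
      ∀ p : PrefList W, Mech.OSPAux m (next p) {pbar ∈ P | next (pbar q) = next p}

/-- `I` is obviously strategy-proof (OSP) for man `m`. -/
def Mech.OSPFor {M W : Type} (I : Mech M W) (m : M) : Prop :=
  Mech.OSPAux m I Set.univ

/-- A matching rule is OSP-implementable if it is implemented by some mechanism that
is OSP for every man. -/
def OSPImplementable {M W : Type} (C : (M → PrefList W) → Matching M W) : Prop :=
  ∃ I : Mech M W, (∀ m : M, I.OSPFor m) ∧ ∀ pbar, I.run pbar = C pbar

/-- A two-sides-querying extensive-form matching mechanism: internal nodes may query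
either a man (about his preference list over `W`) or a woman (about her preference
list over `M`). -/
inductive Mech2 (M W : Type) : Type
  | leaf (μ : Matching M W)
  | nodeM (q : M) (next : PrefList W → Mech2 M W)
  | nodeW (q : W) (next : PrefList M → Mech2 M W)

/-- The two-sides-querying matching rule implemented by a two-sides-querying mechanism. -/
def Mech2.run {M W : Type} :
    Mech2 M W → (M → PrefList W) → (W → PrefList M) → Matching M W
  | .leaf μ, _, _ => μ
  | .nodeM q next, pbar, qbar => (next (pbar q)).run pbar qbar
  | .nodeW q next, pbar, qbar => (next (qbar q)).run pbar qbar

/-- Auxiliary definition of obvious strategy-proofness of a two-sides-querying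
mechanism for man `m`; `P` is the set of two-sided profiles passing through the
current node. -/
def Mech2.OSPAux {M W : Type} (m : M) :
    Mech2 M W → Set ((M → PrefList W) × (W → PrefList M)) → Prop
  | .leaf _, _ => True
  | .nodeM q next, P =>
      (q = m → ∀ r ∈ P, ∀ r' ∈ P, next (r.1 m) ≠ next (r'.1 m) →
        ¬ outPrefers (r.1 m) (((next (r'.1 m)).run r'.1 r'.2).toFun m)
            (((next (r.1 m)).run r.1 r.2).toFun m)) ∧
      ∀ p : PrefList W, Mech2.OSPAux m (next p) {r ∈ P | next (r.1 q) = next p}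
  | .nodeW q next, P =>
      ∀ p : PrefList M, Mech2.OSPAux m (next p) {r ∈ P | next (r.2 q) = next p}

/-- A two-sides-querying mechanism `I` is obviously strategy-proof (OSP) for man `m`. -/
def Mech2.OSPForM {M W : Type} (I : Mech2 M W) (m : M) : Prop :=
  Mech2.OSPAux m I Set.univ

/-!
When every woman ranks all men by the same list `q`, a stable matching is forced to be serial
dictatorship in the order `q`: if the `k`-th man on `q` preferred a woman not taken by the first
`k - 1` men, she would be unmatched or matched to a man she ranks below him, and the two would
block. So the first `k` men's partners are determined by their own lists alone. Hence the
mechanism that asks the men, in the order `q`, to reveal their lists and then outputs `C` of the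
answers is obviously strategy-proof: once a man is asked, the answers of his predecessors are
fixed, and every continuation gives him his favourite among the women they left, whatever
anyone else reports.
-/

theorem List.pair_sublist_or_of_mem {α : Type*} {x y : α} {l : List α} (hx : x ∈ l)
    (hy : y ∈ l) (hxy : x ≠ y) : [x, y].Sublist l ∨ [y, x].Sublist l := by
  induction l with
  | nil => simp at hx
  | cons a t ih =>
    rcases List.mem_cons.1 hx with rfl | hx'
    · have hyt : y ∈ t := (List.mem_cons.1 hy).resolve_left hxy.symm
      exact Or.inl ((List.singleton_sublist.2 hyt).cons_cons x)
    · rcases List.mem_cons.1 hy with rfl | hy'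
      · exact Or.inr ((List.singleton_sublist.2 hx').cons_cons y)
      · exact (ih hx' hy').imp (·.cons a) (·.cons a)

lemma prefers_irrefl {α : Type} (p : PrefList α) (x : α) : ¬ prefers p x x := by
  rintro (h | ⟨hx, hx'⟩)
  · exact List.nodup_iff_sublist.1 p.2 x h
  · exact hx' hx

/-- `o` is the member of `A` that `p` ranks highest, or `none` if `p` ranks no member of `A`. -/
def IsFavoriteIn {α : Type} (p : PrefList α) (A : Set α) : Option α → Prop
  | some w => w ∈ p.val ∧ w ∈ A ∧ ∀ w', [w', w].Sublist p.val → w' ∉ A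
  | none => ∀ w ∈ p.val, w ∉ A

namespace IsFavoriteIn

variable {α : Type} {p : PrefList α} {A : Set α} {o : Option α}

lemma none_iff : IsFavoriteIn p A none ↔ ∀ w ∈ p.val, w ∉ A := Iff.rfl

lemma unique {o' : Option α} (h : IsFavoriteIn p A o) (h' : IsFavoriteIn p A o') : o = o' := by
  match o, o', h, h' with
  | none, none, _, _ => rfl
  | some w, none, ⟨hw, hA, _⟩, h' => exact absurd hA (none_iff.1 h' w hw)
  | none, some w', h, ⟨hw', hA', _⟩ => exact absurd hA' (none_iff.1 h w' hw')
  | some w, some w', ⟨hw, hA, hmin⟩, ⟨hw', hA', hmin'⟩ =>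
    by_cases e : w = w'
    · rw [e]
    · rcases List.pair_sublist_or_of_mem hw hw' e with hs | hs
      · exact absurd hA (hmin' w hs)
      · exact absurd hA' (hmin w' hs)

lemma not_outPrefers {o' : Option α} (h : IsFavoriteIn p A o)
    (h' : ∀ w, o' = some w → w ∈ A) : ¬ outPrefers p o' o := by
  match o, o', h with
  | none, none, _ => exact id
  | none, some w', h => exact fun hw' => none_iff.1 h w' hw' (h' w' rfl)
  | some _, none, ⟨hw, _, _⟩ => exact (· hw)
  | some _, some w', ⟨hw, _, hmin⟩ =>
    rintro (hs | ⟨_, hw'⟩)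
    · exact hmin w' hs (h' w' rfl)
    · exact hw' hw

end IsFavoriteIn

def unclaimed {M W : Type} (μ : Matching M W) (l : List M) : Set W :=
  {w | ∀ m ∈ l, μ.toFun m ≠ some w}

section Stability

variable {M W : Type} {pbar : M → PrefList W} {qbar : W → PrefList M} {μ : Matching M W}
  {m : M} {w : W}

lemma IsStable.not_blocking (hst : IsStable pbar qbar μ)
    (hm : outPrefers (pbar m) (some w) (μ.toFun m)) : ¬ womanPrefersOver (qbar w) μ w m :=
  fun hw => hst (Or.inl ⟨m, w, hm, hw⟩)

lemma IsStable.mem_of_toFun_eq (hst : IsStable pbar qbar μ) (h : μ.toFun m = some w) :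
    w ∈ (pbar m).val := by
  by_contra hw
  exact hst (Or.inr ⟨m, w, h, Or.inl hw⟩)

variable {q : PrefList M} {l₁ l₂ : List M}

lemma womanPrefersOver_of_mem_unclaimed (hfull : IsFull q) (hq : q.val = l₁ ++ m :: l₂)
    (hw : w ∈ unclaimed μ l₁) (hm : μ.toFun m ≠ some w) : womanPrefersOver q μ w m := by
  by_cases hmatched : ∃ m', μ.toFun m' = some w
  · obtain ⟨m', hm'⟩ := hmatched
    have hm'l₂ : m' ∈ l₂ := by
      have hm'q := hfull m'
      rw [hq] at hm'q
      rcases List.mem_append.1 hm'q with h | h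
      · exact absurd hm' (hw m' h)
      · exact (List.mem_cons.1 h).resolve_left (by rintro rfl; exact hm hm')
    refine Or.inl ⟨m', hm', Or.inl ?_⟩
    rw [hq]
    exact ((List.singleton_sublist.2 hm'l₂).cons_cons m).trans
      (List.sublist_append_right l₁ _)
  · push Not at hmatched
    exact Or.inr ⟨hmatched, hfull m⟩

/-- Under aligned full preferences of the women, a stable matching is serial dictatorship in
the order of `q`. -/
lemma IsStable.isFavoriteIn_unclaimed (hfull : IsFull q) (hst : IsStable pbar (fun _ => q) μ)
    (hq : q.val = l₁ ++ m :: l₂) : IsFavoriteIn (pbar m) (unclaimed μ l₁) (μ.toFun m) := by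
  have hm : m ∉ l₁ := fun h => List.disjoint_of_nodup_append (hq ▸ q.2) h List.mem_cons_self
  have no_better : ∀ w ∈ unclaimed μ l₁, ¬ outPrefers (pbar m) (some w) (μ.toFun m) :=
    fun w hw hout => hst.not_blocking hout <| womanPrefersOver_of_mem_unclaimed hfull hq hw
      fun h => prefers_irrefl _ w (by rwa [h] at hout)
  rcases hμm : μ.toFun m with _ | w₀
  · exact IsFavoriteIn.none_iff.2 fun w hw hA => no_better w hA (by rw [hμm]; exact hw)
  · refine ⟨hst.mem_of_toFun_eq hμm, fun m' hm' h => hm (μ.inj h hμm ▸ hm'), ?_⟩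
    exact fun w hs hA => no_better w hA (by rw [hμm]; exact Or.inl hs)

variable {u v : M → PrefList W} {ν : Matching M W}

lemma IsStable.toFun_eq_of_eqOn_prefix (hfull : IsFull q)
    (hμ : IsStable u (fun _ => q) μ) (hν : IsStable v (fun _ => q) ν)
    (hq : q.val = l₁ ++ l₂) (huv : ∀ x ∈ l₁, u x = v x) :
    ∀ x ∈ l₁, μ.toFun x = ν.toFun x := by
  induction l₁ using List.reverseRecOn generalizing l₂ with
  | nil => simp
  | append_singleton l a ih =>
    have hq' : q.val = l ++ a :: l₂ := by simp [hq]
    have ih' := ih hq' fun x hx => huv x (by simp [hx])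
    have hunclaimed : unclaimed μ l = unclaimed ν l := by
      ext w
      exact forall₂_congr fun x hx => by rw [ih' x hx]
    have ha : μ.toFun a = ν.toFun a := by
      have hνa := hν.isFavoriteIn_unclaimed hfull hq'
      rw [← huv a (by simp), ← hunclaimed] at hνa
      exact (hμ.isFavoriteIn_unclaimed hfull hq').unique hνa
    intro x hx
    rcases List.mem_append.1 hx with hx | hx
    · exact ih' x hx
    · rwa [List.mem_singleton.1 hx]

lemma IsStable.not_outPrefers_of_eqOn_prefix (hfull : IsFull q)
    (hμ : IsStable u (fun _ => q) μ) (hν : IsStable v (fun _ => q) ν)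
    (hq : q.val = l₁ ++ m :: l₂) (huv : ∀ x ∈ l₁, u x = v x) :
    ¬ outPrefers (u m) (ν.toFun m) (μ.toFun m) := by
  have hunclaimed : unclaimed ν l₁ = unclaimed μ l₁ := by
    ext w
    exact forall₂_congr fun x hx => by rw [hμ.toFun_eq_of_eqOn_prefix hfull hν hq huv x hx]
  refine (hμ.isFavoriteIn_unclaimed hfull hq).not_outPrefers fun w hw => ?_
  have hνm := hν.isFavoriteIn_unclaimed hfull hq
  rw [hw, hunclaimed] at hνm
  exact hνm.2.1

end Stability

section Revelation

variable {M W : Type} [DecidableEq M]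

/-- Asks the men of `l` in turn for their lists; `g` holds the answers given so far. -/
def revelationMech (C : (M → PrefList W) → Matching M W) :
    List M → (M → PrefList W) → Mech M W
  | [], g => .leaf (C g)
  | m :: l, g => .node m fun p => revelationMech C l (Function.update g m p)

lemma revelationMech_run (C : (M → PrefList W) → Matching M W) (l : List M)
    (g pbar : M → PrefList W) :
    (revelationMech C l g).run pbar = C (l.toFinset.piecewise pbar g) := by
  induction l generalizing g with
  | nil => exact congrArg C (Finset.piecewise_empty _ _).symm
  | cons m l ih =>
    rw [revelationMech, Mech.run, ih, List.toFinset_cons, Finset.piecewise_insert,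
      Finset.update_piecewise, Function.update_eq_self]

lemma revelationMech_OSPAux {q : PrefList M} (hfull : IsFull q)
    {C : (M → PrefList W) → Matching M W} (hC : IsStableRule (fun _ => q) C) (m : M)
    {l₁ l : List M} (hq : q.val = l₁ ++ l) (g : M → PrefList W) (P : Set (M → PrefList W)) :
    (revelationMech C l g).OSPAux m P := by
  induction l generalizing l₁ g P with
  | nil => trivial
  | cons a l ih =>
    refine ⟨?_, fun p => ih (l₁ := l₁ ++ [a]) (by simp [hq]) _ _⟩
    rintro rfl u - v - -
    have hrun (z : M → PrefList W) :
        (revelationMech C l (Function.update g a (z a))).run z =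
          C ((a :: l).toFinset.piecewise z g) :=
      revelationMech_run C (a :: l) g z
    have hagree :
        ∀ x ∈ l₁, (a :: l).toFinset.piecewise u g x = (a :: l).toFinset.piecewise v g x := by
      intro x hx
      have hx' : x ∉ (a :: l).toFinset :=
        List.mem_toFinset.not.2 (List.disjoint_of_nodup_append (hq ▸ q.2) hx)
      simp only [Finset.piecewise_eq_of_notMem _ _ _ hx']
    have key := (hC _).not_outPrefers_of_eqOn_prefix hfull (hC _) hq hagree
    rw [Finset.piecewise_eq_of_mem _ _ _ (by simp), ← hrun, ← hrun] at key
    exact key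

end Revelation

theorem mOptimal_OSPImplementable_of_alignedPrefs_general
    {M W : Type} [DecidableEq M]
    (q : PrefList M) (hfull : IsFull q)
    (C : (M → PrefList W) → Matching M W)
    (hC : IsMOptimalStableRule (fun _ : W => q) C) :
    OSPImplementable C := by
  have hstable : IsStableRule (fun _ => q) C := fun pbar => (hC pbar).1
  let g₀ : M → PrefList W := fun _ => ⟨[], List.nodup_nil⟩
  refine ⟨revelationMech C q.val g₀,
    fun m => revelationMech_OSPAux hfull hstable m (l₁ := []) rfl _ _, fun pbar => ?_⟩
  rw [revelationMech_run]
  congr 1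
  funext x
  exact Finset.piecewise_eq_of_mem _ _ _ (List.mem_toFinset.2 (hfull x))

/-- If `|M| = |W|`, every woman's preference list is full, and all women
share the same preference list `q`, then the M-optimal stable matching rule is
OSP-implementable. -/
theorem mOptimal_OSPImplementable_of_alignedPrefs
    {M W : Type} [Fintype M] [Fintype W] [DecidableEq M]
    (hcard : Fintype.card M = Fintype.card W)
    (q : PrefList M) (hfull : IsFull q)
    (C : (M → PrefList W) → Matching M W)
    (hC : IsMOptimalStableRule (fun _ : W => q) C) :
    OSPImplementable C :=
  mOptimal_OSPImplementable_of_alignedPrefs_general q hfull C hC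
end

section
/- Suppose |M| = |W|, every woman's preference list is full (ranks all of M), and the profile q̄ ∈ P(M)^W is acyclical. Then the M-optimal stable matching rule C^q̄ is OSP-implementable. -/
open Classical in
noncomputable def Matching.ofFun {M W : Type} (f : M → Option W) : Matching M W :=
  if h : ∀ ⦃m m' : M⦄ ⦃w : W⦄, f m = some w → f m' = some w → m = m' then ⟨f, h⟩
  else ⟨fun _ => none, by simp⟩

theorem Matching.ofFun_toFun {M W : Type} {f : M → Option W}
    (h : ∀ ⦃m m' : M⦄ ⦃w : W⦄, f m = some w → f m' = some w → m = m') :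
    (Matching.ofFun f).toFun = f := by
  rw [Matching.ofFun, dif_pos h]

theorem Matching.ext {M W : Type} {μ ν : Matching M W} (h : μ.toFun = ν.toFun) : μ = ν := by
  cases μ
  cases ν
  congr

namespace AcyclicOSP

section Preferences

variable {α : Type} {p : PrefList α} {x y : α}

theorem _root_.List.Nodup.not_pair_sublist_of_pair_sublist {l : List α} (hn : l.Nodup)
    (h : [x, y].Sublist l) : ¬ [y, x].Sublist l := by
  intro h'
  induction l with
  | nil => simp at h
  | cons a t ih =>
    simp only [List.sublist_cons_iff, List.nodup_cons] at *
    grind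

theorem _root_.List.pair_sublist_or_pair_sublist {l : List α} (hx : x ∈ l) (hy : y ∈ l)
    (hxy : x ≠ y) : [x, y].Sublist l ∨ [y, x].Sublist l :=
  List.Pairwise.forall_of_forall_of_flip
    (R := fun a b => a ≠ b → [a, b].Sublist l ∨ [b, a].Sublist l)
    (fun _ _ h => absurd rfl h) (List.pairwise_of_forall_sublist fun h _ => Or.inl h)
    (List.pairwise_of_forall_sublist fun h _ => Or.inr h) hx hy hxy

theorem _root_.List.Nodup.not_pair_sublist_of_find?_eq_some {q : α → Bool} {l : List α}
    (hn : l.Nodup) (hl : l.find? q = some y) (hx : q x) : ¬ [x, y].Sublist l := by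
  intro hs
  induction l with
  | nil => simp at hl
  | cons a l ih =>
    simp only [List.sublist_cons_iff, List.nodup_cons, List.find?_cons] at *
    grind

theorem _root_.prefers.asymm (h : prefers p x y) : ¬ prefers p y x := by
  intro h'
  rcases h with h | ⟨-, hy⟩ <;> rcases h' with h' | ⟨hy', hx'⟩
  · exact p.prop.not_pair_sublist_of_pair_sublist h h'
  · exact hx' (h.subset (by simp))
  · exact hy (h'.subset (by simp))
  · exact hy hy'

theorem prefers_irrefl : ¬ prefers p x x := fun h => h.asymm h

theorem prefers_total (hx : x ∈ p.val) (hy : y ∈ p.val) (hxy : x ≠ y) :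
    prefers p x y ∨ prefers p y x :=
  (List.pair_sublist_or_pair_sublist hx hy hxy).imp Or.inl Or.inl

theorem outPrefers_irrefl {o : Option α} : ¬ outPrefers p o o := by
  cases o with
  | none => exact id
  | some x => exact prefers_irrefl

theorem eq_of_not_outPrefers {o o' : Option α} (h : ¬ outPrefers p o o')
    (h' : ¬ outPrefers p o' o) (ho : ∀ x ∈ o, x ∈ p.val) (ho' : ∀ x ∈ o', x ∈ p.val) :
    o = o' := by
  cases o with
  | none =>
    cases o' with
    | none => rfl
    | some y => exact absurd (ho' y rfl) h'
  | some x =>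
    cases o' with
    | none => exact absurd (ho x rfl) h
    | some y =>
      by_contra hxy
      have hne : x ≠ y := fun hxy' => hxy (congrArg some hxy')
      exact (prefers_total (ho x rfl) (ho' y rfl) hne).elim h h'

end Preferences

section Favourite

variable {α : Type} [DecidableEq α] {A B S : Finset α} {p : PrefList α} {a t w : α}
  {o o' : Option α}

def topIn (B : Finset α) (p : PrefList α) : Option α := p.val.find? (· ∈ B)

theorem topIn_mem (h : topIn B p = some t) : t ∈ B ∧ t ∈ p.val :=
  ⟨by simpa using List.find?_some h, List.mem_of_find?_eq_some h⟩

theorem topIn_eq_none : topIn B p = none ↔ ∀ w ∈ B, w ∉ p.val := by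
  simp only [topIn, List.find?_eq_none, decide_eq_true_eq]
  exact ⟨fun h w hw hp => h w hp hw, fun h w hp hw => h w hw hp⟩

theorem exists_topIn_eq_some (ha : a ∈ B) (hap : a ∈ p.val) : ∃ t, topIn B p = some t :=
  Option.ne_none_iff_exists'.1 fun h => topIn_eq_none.1 h a ha hap

theorem not_prefers_topIn (h : topIn B p = some t) (hw : w ∈ B) : ¬ prefers p w t := by
  rintro (hs | ⟨-, ht⟩)
  · exact p.prop.not_pair_sublist_of_find?_eq_some h (by simpa using hw) hs
  · exact ht (topIn_mem h).2

theorem not_outPrefers_topIn (ho : ∀ w ∈ o, w ∈ B) : ¬ outPrefers p o (topIn B p) := by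
  intro h
  rcases ht : topIn B p with _ | t <;> rw [ht] at h
  · cases o with
    | none => exact h
    | some w => exact topIn_eq_none.1 ht w (ho w rfl) h
  · cases o with
    | none => exact h (topIn_mem ht).2
    | some w => exact not_prefers_topIn ht (ho w rfl) h

theorem outPrefers_topIn_of_ne (ho : ∀ w ∈ o, w ∈ B ∧ w ∈ p.val) (hne : o ≠ topIn B p) :
    outPrefers p (topIn B p) o := by
  rcases ht : topIn B p with _ | t <;> rw [ht] at hne
  · obtain ⟨w, rfl⟩ := Option.ne_none_iff_exists'.1 hne
    exact absurd (ho w rfl).2 (topIn_eq_none.1 ht w (ho w rfl).1)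
  · cases o with
    | none => exact (topIn_mem ht).2
    | some w =>
      have hwt : t ≠ w := fun h => hne (congrArg some h.symm)
      exact (prefers_total (topIn_mem ht).2 (ho w rfl).2 hwt).resolve_right
        (not_prefers_topIn ht (ho w rfl).1)

theorem topIn_eq_of_subset (hS : S ⊆ B) (h : ∀ t ∈ topIn B p, t ∈ S) :
    topIn S p = topIn B p := by
  rcases ht : topIn B p with _ | t
  · exact topIn_eq_none.2 fun w hw => topIn_eq_none.1 ht w (hS hw)
  have htS : t ∈ S := h t ht
  obtain ⟨s, hs⟩ := exists_topIn_eq_some htS (topIn_mem ht).2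
  rw [hs]
  by_contra hst
  have hne : s ≠ t := fun h => hst (congrArg some h)
  rcases prefers_total (topIn_mem hs).2 (topIn_mem ht).2 hne with h' | h'
  · exact not_prefers_topIn ht (hS (topIn_mem hs).1) h'
  · exact not_prefers_topIn hs htS h'

theorem topIn_sdiff_of_ne (h : o ≠ topIn B p) : topIn (B \ o.toFinset) p = topIn B p :=
  topIn_eq_of_subset Finset.sdiff_subset fun _ ht => Finset.mem_sdiff.2
    ⟨(topIn_mem ht).1, fun hto => h ((Option.mem_toFinset.1 hto).trans ht.symm)⟩

theorem not_outPrefers_topIn_sdiff (o : Option α) (ho' : ∀ w ∈ o', w ∈ B ∧ some w ≠ topIn B p) :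
    ¬ outPrefers p o' (topIn (B \ o.toFinset) p) := by
  by_cases h : o = topIn B p
  · refine not_outPrefers_topIn fun w hw => Finset.mem_sdiff.2 ⟨(ho' w hw).1, fun hwo => ?_⟩
    exact (ho' w hw).2 ((Option.mem_toFinset.1 hwo).symm.trans h)
  · rw [topIn_sdiff_of_ne h]
    exact not_outPrefers_topIn fun w hw => (ho' w hw).1

theorem topIn_eq_some_of_forall_prefers (ha : a ∈ A) (hap : a ∈ p.val)
    (hpref : ∀ m ∈ A, m ≠ a → prefers p a m) : topIn A p = some a := by
  obtain ⟨a', ha'⟩ := exists_topIn_eq_some ha hap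
  rw [ha']
  by_contra hne
  exact not_prefers_topIn ha' ha (hpref a' (topIn_mem ha').1 fun h => hne (congrArg some h))

theorem prefers_topIn (hfull : IsFull p) (ht : topIn A p = some t) (hw : w ∈ A) (hne : w ≠ t) :
    prefers p t w :=
  (prefers_total (hfull t) (hfull w) hne.symm).resolve_right (not_prefers_topIn ht hw)

end Favourite

section Women

variable {M W : Type} {qbar : W → PrefList M} {A : Finset M} {B : Finset W}
  {a b c m m₁ m₂ : M} {w x y : W} {o : Option W}

variable (qbar) in
/-- With `m₁ = m₂` this says that `m₁` is the favourite in `A` of every woman of `B`. -/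
def IsTopPair (A : Finset M) (B : Finset W) (m₁ m₂ : M) : Prop :=
  m₁ ∈ A ∧ m₂ ∈ A ∧ ∀ w ∈ B, ∀ m ∈ A, m ≠ m₁ → m ≠ m₂ →
    prefers (qbar w) m₁ m ∧ prefers (qbar w) m₂ m

theorem IsTopPair.symm (hp : IsTopPair qbar A B m₁ m₂) : IsTopPair qbar A B m₂ m₁ :=
  ⟨hp.2.1, hp.1, fun w hw m hm h₁ h₂ => (hp.2.2 w hw m hm h₂ h₁).symm⟩

theorem IsTopPair.eq_of_prefers (hp : IsTopPair qbar A B m₁ m₂) (hw : w ∈ B) (hm : m ∈ A)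
    (h : prefers (qbar w) m m₁) : m = m₂ := by
  by_contra hne
  have hm₁ : m ≠ m₁ := by rintro rfl; exact prefers_irrefl h
  exact h.asymm (hp.2.2 w hw m hm hm₁ hne).1

variable [DecidableEq M]

variable (qbar) in
def Clinches (A : Finset M) (m : M) (o : Option W) : Prop :=
  ∀ w ∈ o, topIn A (qbar w) = some m

theorem not_prefers_chain_above_topIn (hfull : ∀ w, IsFull (qbar w)) (hacyc : ¬ Cyclical qbar)
    (hy : topIn A (qbar y) = some c) (ha : a ∈ A) (hab : prefers (qbar x) a b)
    (hbc : prefers (qbar x) b c) : False :=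
  hacyc ⟨a, b, c, x, y, hab, hbc,
    prefers_topIn (hfull y) hy ha (by rintro rfl; exact hab.asymm hbc)⟩

theorem prefers_of_distinct_topIn (hfull : ∀ w, IsFull (qbar w)) (hacyc : ¬ Cyclical qbar)
    (h₁ : topIn A (qbar x) = some m₁) (h₂ : topIn A (qbar y) = some m₂) (h₁₂ : m₁ ≠ m₂)
    (hm : m ∈ A) (hm₁ : m ≠ m₁) (hm₂ : m ≠ m₂) (w : W) : prefers (qbar w) m₁ m := by
  refine (prefers_total (hfull w m₁) (hfull w m) hm₁.symm).resolve_right fun h => ?_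
  rcases prefers_total (hfull w m₁) (hfull w m₂) h₁₂ with h' | h'
  · exact not_prefers_chain_above_topIn hfull hacyc h₂ hm h h'
  rcases prefers_total (hfull w m) (hfull w m₂) hm₂ with h'' | h''
  · exact not_prefers_chain_above_topIn hfull hacyc h₁ hm h'' h'
  · exact not_prefers_chain_above_topIn hfull hacyc h₁ (topIn_mem h₂).1 h'' h

theorem exists_isTopPair (hfull : ∀ w, IsFull (qbar w)) (hacyc : ¬ Cyclical qbar)
    (hA : A.Nonempty) (B : Finset W) : ∃ m₁ m₂, IsTopPair qbar A B m₁ m₂ := by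
  obtain ⟨a, ha⟩ := hA
  by_cases hsplit : ∃ x ∈ B, ∃ y ∈ B, topIn A (qbar x) ≠ topIn A (qbar y)
  · obtain ⟨x, -, y, -, hne⟩ := hsplit
    obtain ⟨m₁, h₁⟩ := exists_topIn_eq_some ha (hfull x a)
    obtain ⟨m₂, h₂⟩ := exists_topIn_eq_some ha (hfull y a)
    have h₁₂ : m₁ ≠ m₂ := by rintro rfl; exact hne (h₁.trans h₂.symm)
    exact ⟨m₁, m₂, (topIn_mem h₁).1, (topIn_mem h₂).1, fun w _ m hm hm₁ hm₂ =>
      ⟨prefers_of_distinct_topIn hfull hacyc h₁ h₂ h₁₂ hm hm₁ hm₂ w,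
        prefers_of_distinct_topIn hfull hacyc h₂ h₁ h₁₂.symm hm hm₂ hm₁ w⟩⟩
  push Not at hsplit
  rcases B.eq_empty_or_nonempty with rfl | ⟨x, hx⟩
  · exact ⟨a, a, ha, ha, by simp⟩
  obtain ⟨m₁, h₁⟩ := exists_topIn_eq_some ha (hfull x a)
  have htop : ∀ w ∈ B, topIn A (qbar w) = some m₁ := fun w hw => (hsplit w hw x hx).trans h₁
  exact ⟨m₁, m₁, (topIn_mem h₁).1, (topIn_mem h₁).1, fun w hw m hm hm₁ _ =>
    ⟨prefers_topIn (hfull w) (htop w hw) hm hm₁, prefers_topIn (hfull w) (htop w hw) hm hm₁⟩⟩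

namespace IsTopPair

theorem topIn_eq (hp : IsTopPair qbar A B m₁ m₂) (hfull : ∀ w, IsFull (qbar w)) (hw : w ∈ B) :
    topIn A (qbar w) = some m₁ ∨ topIn A (qbar w) = some m₂ := by
  obtain ⟨h, hh⟩ := exists_topIn_eq_some hp.1 (hfull w m₁)
  rw [hh]
  by_contra hne
  simp only [not_or, Option.some.injEq] at hne
  exact not_prefers_topIn hh hp.1 (hp.2.2 w hw h (topIn_mem hh).1 hne.1 hne.2).1

theorem exists_of_not_clinches (hp : IsTopPair qbar A B m₁ m₂) (hfull : ∀ w, IsFull (qbar w))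
    (ho : ∀ w ∈ o, w ∈ B) (h : ¬ Clinches qbar A m₁ o) :
    ∃ t, o = some t ∧ topIn A (qbar t) = some m₂ ∧ m₁ ≠ m₂ := by
  simp only [Clinches, not_forall] at h
  obtain ⟨t, hto, ht⟩ := h
  have htop := (hp.topIn_eq hfull (ho t hto)).resolve_left ht
  exact ⟨t, hto, htop, fun h => ht (h ▸ htop)⟩

theorem ne_of_not_clinches (hp : IsTopPair qbar A B m₁ m₂) (hfull : ∀ w, IsFull (qbar w))
    (ho : ∀ w ∈ o, w ∈ B) (h : ¬ Clinches qbar A m₁ o) : m₁ ≠ m₂ := by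
  obtain ⟨-, -, -, hne⟩ := hp.exists_of_not_clinches hfull ho h
  exact hne

theorem clinches_erase (hp : IsTopPair qbar A B m₁ m₂) (hfull : ∀ w, IsFull (qbar w))
    (hne : m₁ ≠ m₂) (ho : ∀ w ∈ o, w ∈ B) :
    Clinches qbar (A.erase m₁) m₂ o := fun w hw =>
  topIn_eq_some_of_forall_prefers (Finset.mem_erase.2 ⟨hne.symm, hp.2.1⟩) (hfull w m₂)
    fun m hm hm₂ => (hp.2.2 w (ho w hw) m (Finset.mem_of_mem_erase hm)
      (Finset.ne_of_mem_erase hm) hm₂).2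

end IsTopPair

end Women

section Submarket

variable {M W : Type} {qbar : W → PrefList M} {A : Finset M} {B : Finset W}
  {pbar : M → PrefList W} {f g : M → Option W} {m m₀ m₁ m₂ : M} {t v : W}

structure IsStableIn (qbar : W → PrefList M) (A : Finset M) (B : Finset W)
    (pbar : M → PrefList W) (f : M → Option W) : Prop where
  mem : ∀ m ∈ A, ∀ w ∈ f m, w ∈ B ∧ w ∈ (pbar m).val
  injOn : ∀ m ∈ A, ∀ m' ∈ A, ∀ w, f m = some w → f m' = some w → m = m'
  no_blocking : ∀ m ∈ A, ∀ w ∈ B, outPrefers (pbar m) (some w) (f m) →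
    ∃ m' ∈ A, f m' = some w ∧ prefers (qbar w) m' m

structure IsOptimalStableIn (qbar : W → PrefList M) (A : Finset M) (B : Finset W)
    (pbar : M → PrefList W) (f : M → Option W) : Prop where
  stable : IsStableIn qbar A B pbar f
  optimal : ∀ g, IsStableIn qbar A B pbar g → ∀ m ∈ A, ¬ outPrefers (pbar m) (g m) (f m)

theorem IsStableIn.isStable_of_univ [Fintype M] [Fintype W] {μ : Matching M W}
    (hfull : ∀ w, IsFull (qbar w)) (h : IsStableIn qbar Finset.univ Finset.univ pbar μ.toFun) :
    IsStable pbar qbar μ := by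
  rintro (⟨m, w, hpref, hw⟩ | ⟨m, w, hmw, hbad | hbad⟩)
  · obtain ⟨m', -, hm', hpref'⟩ :=
      h.no_blocking m (Finset.mem_univ m) w (Finset.mem_univ w) hpref
    rcases hw with ⟨m'', hm'', hpref''⟩ | ⟨hun, -⟩
    · obtain rfl := μ.inj hm'' hm'
      exact hpref''.asymm hpref'
    · exact hun m' hm'
  · exact hbad (h.mem m (Finset.mem_univ m) w hmw).2
  · exact hbad (hfull w m)

theorem isStableIn_univ_of_isStable [Fintype M] [Fintype W] {μ : Matching M W}
    (hfull : ∀ w, IsFull (qbar w)) (h : IsStable pbar qbar μ) :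
    IsStableIn qbar Finset.univ Finset.univ pbar μ.toFun := by
  refine ⟨fun m _ w hw => ⟨Finset.mem_univ w, ?_⟩, fun m _ m' _ w h h' => μ.inj h h',
    fun m _ w _ hpref => ?_⟩
  · by_contra hwp
    exact h (Or.inr ⟨m, w, hw, Or.inl hwp⟩)
  by_contra hno
  push Not at hno
  refine h (Or.inl ⟨m, w, hpref, ?_⟩)
  by_cases hmatched : ∃ m', μ.toFun m' = some w
  · obtain ⟨m', hm'⟩ := hmatched
    have hne : m ≠ m' := by rintro rfl; rw [hm'] at hpref; exact outPrefers_irrefl hpref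
    exact Or.inl ⟨m', hm', (prefers_total (hfull w m) (hfull w m') hne).resolve_right
      (hno m' (Finset.mem_univ m') hm')⟩
  · push Not at hmatched
    exact Or.inr ⟨hmatched, hfull w m⟩

theorem eq_of_isOptimalStableIn_univ [Fintype M] [Fintype W]
    {C : (M → PrefList W) → Matching M W} {μ : Matching M W}
    (hfull : ∀ w, IsFull (qbar w)) (hC : IsMOptimalStableRule qbar C)
    (hμ : IsOptimalStableIn qbar Finset.univ Finset.univ pbar μ.toFun) : C pbar = μ := by
  obtain ⟨hCs, hCo⟩ := hC pbar
  have hCs' := isStableIn_univ_of_isStable hfull hCs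
  refine Matching.ext (funext fun m => eq_of_not_outPrefers
    (hμ.optimal _ hCs' m (Finset.mem_univ m)) (hCo μ (hμ.stable.isStable_of_univ hfull) m)
    (fun w hw => (hCs'.mem m (Finset.mem_univ m) w hw).2)
    (fun w hw => (hμ.stable.mem m (Finset.mem_univ m) w hw).2))

variable [DecidableEq W]

theorem IsStableIn.swapped_of_ne (hg : IsStableIn qbar A B pbar g) (hp : IsTopPair qbar A B m₁ m₂)
    (ht : topIn B (pbar m₁) = some t) (hv : topIn B (pbar m₂) = some v) (htv : t ≠ v)
    (hg₁ : g m₁ ≠ some t) : g m₁ = some v ∧ g m₂ = some t := by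
  have h₁ := outPrefers_topIn_of_ne (hg.mem m₁ hp.1) (by rwa [ht])
  rw [ht] at h₁
  obtain ⟨m', hm', hgm', hpref⟩ := hg.no_blocking m₁ hp.1 t (topIn_mem ht).1 h₁
  obtain rfl := hp.eq_of_prefers (topIn_mem ht).1 hm' hpref
  have h₂ := outPrefers_topIn_of_ne (hg.mem m' hm')
    (by rw [hgm', hv]; exact fun h => htv (Option.some.inj h))
  rw [hv] at h₂
  obtain ⟨m'', hm'', hgm'', hpref'⟩ := hg.no_blocking m' hm' v (topIn_mem hv).1 h₂
  obtain rfl := hp.symm.eq_of_prefers (topIn_mem hv).1 hm'' hpref'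
  exact ⟨hgm'', hgm'⟩

variable [DecidableEq M]

theorem IsStableIn.erase (hg : IsStableIn qbar A B pbar g) (hm₀ : m₀ ∈ A) :
    IsStableIn qbar (A.erase m₀) (B \ (g m₀).toFinset) pbar g where
  mem m hm w hw := by
    obtain ⟨hne, hmA⟩ := Finset.mem_erase.1 hm
    refine ⟨Finset.mem_sdiff.2 ⟨(hg.mem m hmA w hw).1, fun hw₀ => hne ?_⟩, (hg.mem m hmA w hw).2⟩
    exact hg.injOn m hmA m₀ hm₀ w hw (Option.mem_toFinset.1 hw₀)
  injOn m hm m' hm' := hg.injOn m (Finset.mem_of_mem_erase hm) m' (Finset.mem_of_mem_erase hm')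
  no_blocking m hm w hw hpref := by
    obtain ⟨hwB, hw₀⟩ := Finset.mem_sdiff.1 hw
    obtain ⟨m', hm', hgm', hpref'⟩ :=
      hg.no_blocking m (Finset.mem_of_mem_erase hm) w hwB hpref
    refine ⟨m', Finset.mem_erase.2 ⟨?_, hm'⟩, hgm', hpref'⟩
    rintro rfl
    exact hw₀ (Option.mem_toFinset.2 hgm')

theorem IsStableIn.eq_topIn_of_clinches (hg : IsStableIn qbar A B pbar g) (hm : m ∈ A)
    (hcl : Clinches qbar A m (topIn B (pbar m))) : g m = topIn B (pbar m) := by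
  by_contra hne
  rcases ht : topIn B (pbar m) with _ | t
  · rcases hgm : g m with _ | w
    · exact hne (hgm.trans ht.symm)
    · exact topIn_eq_none.1 ht w (hg.mem m hm w hgm).1 (hg.mem m hm w hgm).2
  have hpref := outPrefers_topIn_of_ne (hg.mem m hm) hne
  rw [ht] at hpref hcl
  obtain ⟨m', hm', -, hpref'⟩ := hg.no_blocking m hm t (topIn_mem ht).1 hpref
  exact not_prefers_topIn (hcl t rfl) hm' hpref'

theorem IsStableIn.insert (hfull : ∀ w, IsFull (qbar w)) (hm₀ : m₀ ∈ A)
    (hf₀ : f m₀ = topIn B (pbar m₀))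
    (hf : IsStableIn qbar (A.erase m₀) (B \ (topIn B (pbar m₀)).toFinset) pbar f)
    (hno : ∀ t ∈ f m₀, ∀ m ∈ A, prefers (qbar t) m m₀ → ¬ outPrefers (pbar m) (some t) (f m)) :
    IsStableIn qbar A B pbar f := by
  have hother : ∀ m ∈ A, m ≠ m₀ → ∀ w ∈ f m, w ∈ B ∧ w ∉ f m₀ ∧ w ∈ (pbar m).val := by
    intro m hm hne w hw
    obtain ⟨hwB, hwp⟩ := hf.mem m (Finset.mem_erase.2 ⟨hne, hm⟩) w hw
    rw [Finset.mem_sdiff, Option.mem_toFinset, ← hf₀] at hwB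
    exact ⟨hwB.1, hwB.2, hwp⟩
  refine ⟨fun m hm w hw => ?_, fun m hm m' hm' w h h' => ?_, fun m hm w hw hpref => ?_⟩
  · rcases eq_or_ne m m₀ with rfl | hne
    · exact topIn_mem (hf₀ ▸ hw)
    · exact ⟨(hother m hm hne w hw).1, (hother m hm hne w hw).2.2⟩
  · by_cases hne : m = m₀ <;> by_cases hne' : m' = m₀
    · exact hne.trans hne'.symm
    · rw [hne] at h
      exact absurd h (hother m' hm' hne' w h').2.1
    · rw [hne'] at h'
      exact absurd h' (hother m hm hne w h).2.1
    · exact hf.injOn m (Finset.mem_erase.2 ⟨hne, hm⟩) m' (Finset.mem_erase.2 ⟨hne', hm'⟩) w h h'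
  rcases eq_or_ne m m₀ with rfl | hne
  · rw [hf₀] at hpref
    exact absurd hpref (not_outPrefers_topIn (by simpa using hw))
  by_cases hw₀ : w ∈ f m₀
  · rcases prefers_total (hfull w m) (hfull w m₀) hne with h | h
    · exact absurd hpref (hno w hw₀ m hm h)
    · exact ⟨m₀, hm₀, hw₀, h⟩
  obtain ⟨m', hm', h', hpref'⟩ := hf.no_blocking m (Finset.mem_erase.2 ⟨hne, hm⟩) w
    (Finset.mem_sdiff.2 ⟨hw, by rwa [Option.mem_toFinset, ← hf₀]⟩) hpref
  exact ⟨m', Finset.mem_of_mem_erase hm', h', hpref'⟩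

theorem IsOptimalStableIn.insert_of_clinches (hfull : ∀ w, IsFull (qbar w)) (hm₀ : m₀ ∈ A)
    (hcl : Clinches qbar A m₀ (topIn B (pbar m₀))) (hf₀ : f m₀ = topIn B (pbar m₀))
    (hf : IsOptimalStableIn qbar (A.erase m₀) (B \ (topIn B (pbar m₀)).toFinset) pbar f) :
    IsOptimalStableIn qbar A B pbar f := by
  refine ⟨hf.stable.insert hfull hm₀ hf₀ fun t ht m hm hpref => ?_, fun g hg m hm => ?_⟩
  · exact absurd hpref (not_prefers_topIn (hcl t (hf₀ ▸ ht)) hm)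
  have hg₀ := hg.eq_topIn_of_clinches hm₀ hcl
  rcases eq_or_ne m m₀ with rfl | hne
  · rw [hf₀]
    exact not_outPrefers_topIn fun w hw => (hg.mem m hm w hw).1
  · exact hf.optimal g (hg₀ ▸ hg.erase hm₀) m (Finset.mem_erase.2 ⟨hne, hm⟩)

theorem IsStableIn.comp_swap (hg : IsStableIn qbar A B pbar g) (hp : IsTopPair qbar A B m₁ m₂)
    (ht : topIn B (pbar m₁) = some t) (hv : topIn B (pbar m₂) = some v) (hg₁ : g m₁ = some v)
    (hg₂ : g m₂ = some t) : IsStableIn qbar A B pbar (g ∘ Equiv.swap m₁ m₂) := by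
  have hswap : ∀ m ∈ A, Equiv.swap m₁ m₂ m ∈ A := by
    intro m hm
    rw [Equiv.swap_apply_def]
    split_ifs
    exacts [hp.2.1, hp.1, hm]
  have htop : ∀ m, m = m₁ ∨ m = m₂ → g (Equiv.swap m₁ m₂ m) = topIn B (pbar m) := by
    rintro m (rfl | rfl)
    · rw [Equiv.swap_apply_left, hg₂, ht]
    · rw [Equiv.swap_apply_right, hg₁, hv]
  have hfix : ∀ m, ¬ (m = m₁ ∨ m = m₂) → Equiv.swap m₁ m₂ m = m := fun m h =>
    Equiv.swap_apply_of_ne_of_ne (fun h' => h (Or.inl h')) fun h' => h (Or.inr h')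
  refine ⟨fun m hm w hw => ?_, fun m hm m' hm' w h h' => ?_, fun m hm w hw hpref => ?_⟩
  · simp only [Function.comp_apply] at hw
    by_cases h₁₂ : m = m₁ ∨ m = m₂
    · rw [htop m h₁₂] at hw
      exact topIn_mem hw
    · rw [hfix m h₁₂] at hw
      exact hg.mem m hm w hw
  · exact (Equiv.swap m₁ m₂).injective (hg.injOn _ (hswap m hm) _ (hswap m' hm') w h h')
  simp only [Function.comp_apply] at hpref ⊢
  by_cases h₁₂ : m = m₁ ∨ m = m₂
  · rw [htop m h₁₂] at hpref
    exact absurd hpref (not_outPrefers_topIn (by simpa using hw))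
  rw [hfix m h₁₂] at hpref
  obtain ⟨m', hm', hgm', hpref'⟩ := hg.no_blocking m hm w hw hpref
  refine ⟨Equiv.swap m₁ m₂ m', hswap m' hm', by rwa [Equiv.swap_apply_self], ?_⟩
  push Not at h₁₂
  by_cases h' : m' = m₁ ∨ m' = m₂
  · rcases h' with rfl | rfl
    · rw [Equiv.swap_apply_left]
      exact (hp.2.2 w hw m hm h₁₂.1 h₁₂.2).2
    · rw [Equiv.swap_apply_right]
      exact (hp.2.2 w hw m hm h₁₂.1 h₁₂.2).1
  · rwa [hfix m' h']

theorem IsStableIn.exists_unswapped (hg : IsStableIn qbar A B pbar g)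
    (hp : IsTopPair qbar A B m₁ m₂) (ht : topIn B (pbar m₁) = some t)
    (hv : topIn B (pbar m₂) = some v) (htv : t ≠ v) :
    ∃ g', IsStableIn qbar A B pbar g' ∧ g' m₁ = some t ∧ ∀ m, m ≠ m₁ → m ≠ m₂ → g' m = g m := by
  by_cases hg₁ : g m₁ = some t
  · exact ⟨g, hg, hg₁, fun _ _ _ => rfl⟩
  obtain ⟨hv₁, ht₂⟩ := hg.swapped_of_ne hp ht hv htv hg₁
  exact ⟨_, hg.comp_swap hp ht hv hv₁ ht₂, by simp [ht₂],
    fun m h₁ h₂ => by simp [Equiv.swap_apply_of_ne_of_ne h₁ h₂]⟩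

theorem IsOptimalStableIn.insert_swap (hfull : ∀ w, IsFull (qbar w))
    (hp : IsTopPair qbar A B m₁ m₂) (hcl₁ : ¬ Clinches qbar A m₁ (topIn B (pbar m₁)))
    (hcl₂ : ¬ Clinches qbar A m₂ (topIn B (pbar m₂))) (hf₁ : f m₁ = topIn B (pbar m₁))
    (hf : IsOptimalStableIn qbar (A.erase m₁) (B \ (topIn B (pbar m₁)).toFinset) pbar f) :
    IsOptimalStableIn qbar A B pbar f := by
  have hB : ∀ m, ∀ w ∈ topIn B (pbar m), w ∈ B := fun m w hw => (topIn_mem hw).1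
  obtain ⟨t, ht, htop_t, hne⟩ := hp.exists_of_not_clinches hfull (hB m₁) hcl₁
  obtain ⟨v, hv, htop_v, -⟩ := hp.symm.exists_of_not_clinches hfull (hB m₂) hcl₂
  have htv : t ≠ v := by
    rintro rfl
    exact hne (Option.some.inj (htop_v.symm.trans htop_t))
  have hf₂ : f m₂ = topIn B (pbar m₂) := by
    have h := hf.stable.eq_topIn_of_clinches (Finset.mem_erase.2 ⟨hne.symm, hp.2.1⟩)
      (hp.clinches_erase hfull hne fun w hw => (Finset.mem_sdiff.1 (topIn_mem hw).1).1)
    rwa [topIn_sdiff_of_ne (by rw [ht, hv]; exact fun h => htv (Option.some.inj h))] at h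
  refine ⟨hf.stable.insert hfull hp.1 hf₁ fun t' ht' m hm hpref => ?_, fun g hg m hm => ?_⟩
  · rw [hf₁, ht, Option.mem_some_iff] at ht'
    subst ht'
    obtain rfl := hp.eq_of_prefers (topIn_mem ht).1 hm hpref
    rw [hf₂]
    exact not_outPrefers_topIn (by simpa using (topIn_mem ht).1)
  by_cases h₁₂ : m = m₁ ∨ m = m₂
  · have hfm : f m = topIn B (pbar m) := by rcases h₁₂ with rfl | rfl <;> assumption
    rw [hfm]
    exact not_outPrefers_topIn fun w hw => (hg.mem m hm w hw).1
  push Not at h₁₂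
  obtain ⟨g', hg', hg'₁, hg'm⟩ := hg.exists_unswapped hp ht hv htv
  rw [← hg'm m h₁₂.1 h₁₂.2]
  have hg'f : g' m₁ = topIn B (pbar m₁) := hg'₁.trans ht.symm
  exact hf.optimal g' (hg'f ▸ hg'.erase hp.1) m (Finset.mem_erase.2 ⟨h₁₂.1, hm⟩)

end Submarket

section Mechanism

variable {M W : Type} [DecidableEq W] {qbar : W → PrefList M} {A : Finset M}
  {B : Finset W} {σ : M → Option W} {m m₁ m₂ : M} {o : Option W}

def askTop (B : Finset W) (m : M) (k : Option W → Mech M W) : Mech M W :=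
  .node m fun p => k (topIn B p)

theorem run_askTop {k : Option W → Mech M W} (r : M → PrefList W) :
    (askTop B m k).run r = (k (topIn B (r m))).run r :=
  rfl

variable [DecidableEq M]

def IsPartialMatchingOutside (B : Finset W) (σ : M → Option W) : Prop :=
  (∀ m, ∀ w ∈ σ m, w ∉ B) ∧ ∀ ⦃m m' : M⦄ ⦃w : W⦄, σ m = some w → σ m' = some w → m = m'

theorem IsPartialMatchingOutside.update (hσ : IsPartialMatchingOutside B σ)
    (ho : ∀ w ∈ o, w ∈ B) (m : M) :
    IsPartialMatchingOutside (B \ o.toFinset) (Function.update σ m o) := by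
  refine ⟨fun m' w hw hwB => ?_, fun m₁ m₂ w h₁ h₂ => ?_⟩
  · rcases eq_or_ne m' m with rfl | hne
    · rw [Function.update_self] at hw
      exact (Finset.mem_sdiff.1 hwB).2 (Option.mem_toFinset.2 hw)
    · rw [Function.update_of_ne hne] at hw
      exact hσ.1 m' w hw (Finset.mem_sdiff.1 hwB).1
  simp only [Function.update_apply] at h₁ h₂
  split_ifs at h₁ h₂ with hm₁ hm₂ hm₂
  · exact hm₁.trans hm₂.symm
  · exact absurd (ho w h₁) (hσ.1 m₂ w h₂)
  · exact absurd (ho w h₂) (hσ.1 m₁ w h₁)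
  · exact hσ.2 h₁ h₂

variable (qbar) in
open Classical in
noncomputable def offer (A : Finset M) (B : Finset W) (m : M) (k : Option W → Mech M W)
    (fallback : Mech M W) : Mech M W :=
  .node m fun p => if Clinches qbar A m (topIn B p) then k (topIn B p) else fallback

variable (qbar) in
noncomputable def gadget (A : Finset M) (B : Finset W) (m₁ m₂ : M)
    (k₁ k₂ : Option W → Mech M W) : Mech M W :=
  offer qbar A B m₁ k₁ (offer qbar A B m₂ k₂ (askTop B m₁ k₁))

variable (qbar) in
open Classical in
/-- `σ` records the assignments already made to the men outside `A`. -/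
noncomputable def mech (A : Finset M) (B : Finset W) (σ : M → Option W) : Mech M W :=
  if h : ∃ m₁ m₂, IsTopPair qbar A B m₁ m₂ then
    gadget qbar A B h.choose h.choose_spec.choose
      (fun o => mech (A.erase h.choose) (B \ o.toFinset) (Function.update σ h.choose o))
      (fun o => mech (A.erase h.choose_spec.choose) (B \ o.toFinset)
        (Function.update σ h.choose_spec.choose o))
  else .leaf (Matching.ofFun σ)
termination_by A.card
decreasing_by
  · exact Finset.card_erase_lt_of_mem h.choose_spec.choose_spec.1
  · exact Finset.card_erase_lt_of_mem h.choose_spec.choose_spec.2.1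

variable (qbar) in
noncomputable def settle (A : Finset M) (B : Finset W) (σ : M → Option W) (m : M)
    (o : Option W) : Mech M W :=
  mech qbar (A.erase m) (B \ o.toFinset) (Function.update σ m o)

theorem exists_mech_eq_gadget (h : ∃ m₁ m₂, IsTopPair qbar A B m₁ m₂) :
    ∃ m₁ m₂, IsTopPair qbar A B m₁ m₂ ∧
      mech qbar A B σ = gadget qbar A B m₁ m₂ (settle qbar A B σ m₁) (settle qbar A B σ m₂) :=
  ⟨_, _, h.choose_spec.choose_spec, by rw [mech, dif_pos h]; rfl⟩

theorem mech_of_not_exists (h : ¬ ∃ m₁ m₂, IsTopPair qbar A B m₁ m₂) :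
    mech qbar A B σ = .leaf (Matching.ofFun σ) := by
  rw [mech, dif_neg h]

theorem run_offer_of_clinches {k : Option W → Mech M W} {fallback : Mech M W}
    {r : M → PrefList W} (h : Clinches qbar A m (topIn B (r m))) :
    (offer qbar A B m k fallback).run r = (k (topIn B (r m))).run r := by
  simp only [offer, Mech.run, if_pos h]

theorem run_offer_of_not_clinches {k : Option W → Mech M W} {fallback : Mech M W}
    {r : M → PrefList W} (h : ¬ Clinches qbar A m (topIn B (r m))) :
    (offer qbar A B m k fallback).run r = fallback.run r := by
  simp only [offer, Mech.run, if_neg h]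

theorem run_mech (hfull : ∀ w, IsFull (qbar w)) (hacyc : ¬ Cyclical qbar) (A : Finset M) :
    ∀ (B : Finset W) (σ : M → Option W), IsPartialMatchingOutside B σ → ∀ pbar,
      (∀ m ∉ A, ((mech qbar A B σ).run pbar).toFun m = σ m) ∧
        IsOptimalStableIn qbar A B pbar ((mech qbar A B σ).run pbar).toFun := by
  induction A using Finset.strongInduction with
  | H A ih =>
  intro B σ hσ pbar
  by_cases h : ∃ m₁ m₂, IsTopPair qbar A B m₁ m₂
  swap
  · obtain rfl : A = ∅ := by
      by_contra hA
      exact h (exists_isTopPair hfull hacyc (Finset.nonempty_iff_ne_empty.2 hA) B)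
    rw [mech_of_not_exists h, Mech.run, Matching.ofFun_toFun hσ.2]
    exact ⟨fun _ _ => rfl, ⟨⟨by simp, by simp, by simp⟩, by simp⟩⟩
  obtain ⟨m₁, m₂, hp, heq⟩ := exists_mech_eq_gadget (σ := σ) h
  rw [heq]
  have step : ∀ m ∈ A, let f := ((settle qbar A B σ m (topIn B (pbar m))).run pbar).toFun
      (∀ m' ∉ A, f m' = σ m') ∧ f m = topIn B (pbar m) ∧
        IsOptimalStableIn qbar (A.erase m) (B \ (topIn B (pbar m)).toFinset) pbar f := by
    intro m hm
    obtain ⟨hoff, hopt⟩ := ih _ (Finset.erase_ssubset hm) _ _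
      (hσ.update (fun w hw => (topIn_mem hw).1) m) pbar
    refine ⟨fun m' hm' => ?_, ?_, hopt⟩
    · rw [settle, hoff m' fun h => hm' (Finset.mem_of_mem_erase h),
        Function.update_of_ne (by rintro rfl; exact hm' hm)]
    · rw [settle, hoff m (Finset.notMem_erase m A), Function.update_self]
  by_cases h₁ : Clinches qbar A m₁ (topIn B (pbar m₁))
  · rw [gadget, run_offer_of_clinches h₁]
    obtain ⟨hoff, hf₁, hopt⟩ := step m₁ hp.1
    exact ⟨hoff, hopt.insert_of_clinches hfull hp.1 h₁ hf₁⟩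
  by_cases h₂ : Clinches qbar A m₂ (topIn B (pbar m₂))
  · rw [gadget, run_offer_of_not_clinches h₁, run_offer_of_clinches h₂]
    obtain ⟨hoff, hf₂, hopt⟩ := step m₂ hp.2.1
    exact ⟨hoff, hopt.insert_of_clinches hfull hp.2.1 h₂ hf₂⟩
  · rw [gadget, run_offer_of_not_clinches h₁, run_offer_of_not_clinches h₂, run_askTop]
    obtain ⟨hoff, hf₁, hopt⟩ := step m₁ hp.1
    exact ⟨hoff, hopt.insert_swap hfull hp h₁ h₂ hf₁⟩

end Mechanism

section Obvious

variable {M W : Type} [DecidableEq W] {qbar : W → PrefList M} {A : Finset M}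
  {B : Finset W} {σ : M → Option W} {m m₀ m₁ m₂ : M} {o : Option W}

theorem ospAux_askTop {k : Option W → Mech M W}
    (hk : ∀ o, (∀ w ∈ o, w ∈ B) → ∀ r, ((k o).run r).toFun m₀ = o)
    (hrec : ∀ o, (∀ w ∈ o, w ∈ B) → ∀ P, (k o).OSPAux m P) (P : Set (M → PrefList W)) :
    (askTop B m₀ k).OSPAux m P := by
  have hB : ∀ p, ∀ w ∈ topIn B p, w ∈ B := fun p w hw => (topIn_mem hw).1
  refine ⟨?_, fun p => hrec _ (hB p) _⟩
  rintro rfl r - r' - -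
  rw [hk _ (hB _) r, hk _ (hB _) r']
  exact not_outPrefers_topIn (hB _)

variable [DecidableEq M]

theorem ospAux_offer {k : Option W → Mech M W} {fallback : Mech M W}
    (hk : ∀ o, (∀ w ∈ o, w ∈ B) → ∀ r, ((k o).run r).toFun m₀ = o)
    (hfallback : ∀ r, ¬ Clinches qbar A m₀ (topIn B (r m₀)) →
      ∃ o : Option W, (fallback.run r).toFun m₀ = topIn (B \ o.toFinset) (r m₀))
    (hrec : ∀ o, (∀ w ∈ o, w ∈ B) → ∀ P, (k o).OSPAux m P)
    (hrec_fallback : ∀ P, fallback.OSPAux m P) (P : Set (M → PrefList W)) :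
    (offer qbar A B m₀ k fallback).OSPAux m P := by
  have hB : ∀ p, ∀ w ∈ topIn B p, w ∈ B := fun p w hw => (topIn_mem hw).1
  refine ⟨?_, fun p => ?_⟩
  · rintro rfl r - r' - hdiv
    by_cases h : Clinches qbar A m₀ (topIn B (r m₀))
    · simp only [if_pos h]
      rw [hk _ (hB _) r]
      refine not_outPrefers_topIn fun w hw => ?_
      by_cases h' : Clinches qbar A m₀ (topIn B (r' m₀))
      · simp only [if_pos h', hk _ (hB _) r'] at hw
        exact hB _ w hw
      · simp only [if_neg h'] at hw
        obtain ⟨o, ho⟩ := hfallback r' h'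
        rw [ho] at hw
        exact (Finset.mem_sdiff.1 (topIn_mem hw).1).1
    · have h' : Clinches qbar A m₀ (topIn B (r' m₀)) := by
        by_contra h'
        simp only [if_neg h, if_neg h'] at hdiv
        exact hdiv rfl
      simp only [if_neg h, if_pos h']
      rw [hk _ (hB _) r']
      obtain ⟨o, ho⟩ := hfallback r h
      rw [ho]
      -- the deviation's woman ranks `m₀` first, his favourite does not
      refine not_outPrefers_topIn_sdiff o fun w hw => ⟨hB _ w hw, fun hw' => h ?_⟩
      rwa [← hw', ← Option.mem_def.1 hw]
  · dsimp only
    split_ifs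
    exacts [hrec _ (hB p) _, hrec_fallback _]

theorem ospAux_gadget (hfull : ∀ w, IsFull (qbar w)) (hp : IsTopPair qbar A B m₁ m₂)
    {k₁ k₂ : Option W → Mech M W}
    (hk₁ : ∀ o, (∀ w ∈ o, w ∈ B) → ∀ r, ((k₁ o).run r).toFun m₁ = o)
    (hk₂ : ∀ o, (∀ w ∈ o, w ∈ B) → ∀ r, ((k₂ o).run r).toFun m₂ = o)
    (hk₁₂ : m₁ ≠ m₂ → ∀ o, (∀ w ∈ o, w ∈ B) → ∀ r,
      ((k₁ o).run r).toFun m₂ = topIn (B \ o.toFinset) (r m₂))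
    (hk₂₁ : m₁ ≠ m₂ → ∀ o, (∀ w ∈ o, w ∈ B) → ∀ r,
      ((k₂ o).run r).toFun m₁ = topIn (B \ o.toFinset) (r m₁))
    (hrec₁ : ∀ o, (∀ w ∈ o, w ∈ B) → ∀ P, (k₁ o).OSPAux m P)
    (hrec₂ : ∀ o, (∀ w ∈ o, w ∈ B) → ∀ P, (k₂ o).OSPAux m P) (P : Set (M → PrefList W)) :
    (gadget qbar A B m₁ m₂ k₁ k₂).OSPAux m P := by
  have hB : ∀ p, ∀ w ∈ topIn B p, w ∈ B := fun p w hw => (topIn_mem hw).1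
  have hfallback₂ : ∀ r, ¬ Clinches qbar A m₂ (topIn B (r m₂)) → ∃ o : Option W,
      ((askTop B m₁ k₁).run r).toFun m₂ = topIn (B \ o.toFinset) (r m₂) := fun r h =>
    ⟨_, hk₁₂ (hp.symm.ne_of_not_clinches hfull (hB _) h).symm _ (hB _) r⟩
  have hfallback₁ : ∀ r, ¬ Clinches qbar A m₁ (topIn B (r m₁)) → ∃ o : Option W,
      ((offer qbar A B m₂ k₂ (askTop B m₁ k₁)).run r).toFun m₁ =
        topIn (B \ o.toFinset) (r m₁) := by
    intro r h
    by_cases h₂ : Clinches qbar A m₂ (topIn B (r m₂))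
    · rw [run_offer_of_clinches h₂]
      exact ⟨_, hk₂₁ (hp.ne_of_not_clinches hfull (hB _) h) _ (hB _) r⟩
    · rw [run_offer_of_not_clinches h₂, run_askTop, hk₁ _ (hB _) r]
      exact ⟨none, by simp⟩
  exact ospAux_offer hk₁ hfallback₁ hrec₁
    (ospAux_offer hk₂ hfallback₂ hrec₂ (ospAux_askTop hk₁ hrec₁)) P

theorem run_settle_self (hfull : ∀ w, IsFull (qbar w)) (hacyc : ¬ Cyclical qbar)
    (hσ : IsPartialMatchingOutside B σ) (ho : ∀ w ∈ o, w ∈ B) (r : M → PrefList W) :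
    ((settle qbar A B σ m o).run r).toFun m = o := by
  rw [settle, (run_mech hfull hacyc _ _ _ (hσ.update ho m) r).1 m (Finset.notMem_erase m A),
    Function.update_self]

theorem run_settle_other (hfull : ∀ w, IsFull (qbar w)) (hacyc : ¬ Cyclical qbar)
    (hp : IsTopPair qbar A B m₁ m₂) (hne : m₁ ≠ m₂) (hσ : IsPartialMatchingOutside B σ)
    (ho : ∀ w ∈ o, w ∈ B) (r : M → PrefList W) :
    ((settle qbar A B σ m₁ o).run r).toFun m₂ = topIn (B \ o.toFinset) (r m₂) :=
  (run_mech hfull hacyc _ _ _ (hσ.update ho m₁) r).2.stable.eq_topIn_of_clinches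
    (Finset.mem_erase.2 ⟨hne.symm, hp.2.1⟩)
    (hp.clinches_erase hfull hne fun _ hw => (Finset.mem_sdiff.1 (topIn_mem hw).1).1)

theorem ospAux_mech (hfull : ∀ w, IsFull (qbar w)) (hacyc : ¬ Cyclical qbar) (A : Finset M) :
    ∀ (B : Finset W) (σ : M → Option W), IsPartialMatchingOutside B σ → ∀ m P,
      (mech qbar A B σ).OSPAux m P := by
  induction A using Finset.strongInduction with
  | H A ih =>
  intro B σ hσ m P
  by_cases h : ∃ m₁ m₂, IsTopPair qbar A B m₁ m₂
  · obtain ⟨m₁, m₂, hp, heq⟩ := exists_mech_eq_gadget (σ := σ) h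
    rw [heq]
    exact ospAux_gadget hfull hp
      (fun _ => run_settle_self hfull hacyc hσ) (fun _ => run_settle_self hfull hacyc hσ)
      (fun hne _ => run_settle_other hfull hacyc hp hne hσ)
      (fun hne _ => run_settle_other hfull hacyc hp.symm hne.symm hσ)
      (fun _ ho => ih _ (Finset.erase_ssubset hp.1) _ _ (hσ.update ho m₁) m)
      (fun _ ho => ih _ (Finset.erase_ssubset hp.2.1) _ _ (hσ.update ho m₂) m) P
  · rw [mech_of_not_exists h]
    trivial

end Obvious

end AcyclicOSP

theorem mOptimal_OSPImplementable_of_acyclical_general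
    {M W : Type} [Fintype M] [Fintype W]
    (qbar : W → PrefList M) (hfull : ∀ w : W, IsFull (qbar w))
    (hacyc : ¬ Cyclical qbar)
    (C : (M → PrefList W) → Matching M W)
    (hC : IsMOptimalStableRule qbar C) :
    OSPImplementable C := by
  classical
  have hσ : AcyclicOSP.IsPartialMatchingOutside (Finset.univ : Finset W) fun _ : M => none :=
    ⟨by simp, by simp⟩
  refine ⟨AcyclicOSP.mech qbar Finset.univ Finset.univ fun _ => none,
    fun m => AcyclicOSP.ospAux_mech hfull hacyc _ _ _ hσ m _, fun pbar => ?_⟩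
  exact (AcyclicOSP.eq_of_isOptimalStableIn_univ hfull hC
    (AcyclicOSP.run_mech hfull hacyc _ _ _ hσ pbar).2).symm

/-- If `|M| = |W|`, every woman's preference list is full, and the
women's profile `qbar` is acyclical, then the M-optimal stable matching rule is
OSP-implementable. -/
theorem mOptimal_OSPImplementable_of_acyclical
    {M W : Type} [Fintype M] [Fintype W] [DecidableEq M]
    (hcard : Fintype.card M = Fintype.card W)
    (qbar : W → PrefList M) (hfull : ∀ w : W, IsFull (qbar w))
    (hacyc : ¬ Cyclical qbar)
    (C : (M → PrefList W) → Matching M W)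
    (hC : IsMOptimalStableRule qbar C) :
    OSPImplementable C :=
  mOptimal_OSPImplementable_of_acyclical_general qbar hfull hacyc C hC
end
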